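/- arXiv:2402.15097 — 2 statements merged into one kernel-verified Lean document; each statement's English description precedes it below -/
import Mathlib

section
/- Let n ≥ 1 and for each i = 1,…,n let X_i be a metric space with metric d_i. Suppose for each i there are sequences of maps φ_q^i : X_i → ℝ^{q} (continuous) and ψ_q^i : ℝ^{q} → X_i, with ψ_q^i continuous on the image φ_q^i(X_i), such that the projections P_q^i := ψ_q^i ∘ φ_q^i satisfy lim_{q→∞} sup_{x∈K} d_i(x, P_q^i(x)) = 0 for every compact K ⊆ X_i. Let Y be a real Banach space, let K_i ⊆ X_i be compact sets, and let 𝒢 : K_1 × ⋯ × K_n → Y be continuous. Then for every ε > 0 there exist a positive integer p, positive integers q_1,…,q_n, continuous functions g_j^i : ℝ^{q_i} → ℝ (for 1 ≤ j ≤ p, 1 ≤ i ≤ n), and elements u_j ∈ Y such that sup over (v_1,…,v_n) ∈ K_1 × ⋯ × K_n of ‖𝒢(v_1,…,v_n) − Σ_{j=1}^{p} g_j^1(φ_{q_1}^1(v_1)) ⋯ g_j^n(φ_{q_n}^n(v_n)) · u_j‖_Y is less than ε. -/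
/-!
Let `δ` be a modulus of uniform continuity of `G` on the compact set `∏ Kᵢ`, and let `ρⁱ` be a
finite partition of unity on `Kᵢ` whose functions are supported in `δ`-balls around points of
`Kᵢ`. The tensor products `∏ᵢ ρⁱ_{cᵢ}(vᵢ)` form a partition of unity on `∏ Kᵢ`, so
`∑_c (∏ᵢ ρⁱ_{cᵢ}(vᵢ)) G(c)` is a convex combination of values of `G` at points `δ`-close to `v`.

Each factor `ρ` is then traded for a continuous function of the discretization: a Tietze
extension `g` of `ρ ∘ ψ_q` from the compact set `φ_q(Kᵢ)`, with values in `[0, 1]`, satisfies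
`g (φ_q x) = ρ (P_q x)`, which is uniformly close to `ρ x` on `Kᵢ` for large `q` because
`P_q → id` uniformly there. Since all factors lie in `[0, 1]`, the errors of the products are
bounded by the sums of the errors of the factors.
-/

open Filter Set Finset

theorem TendstoUniformlyOn.comp_of_mapsTo_isCompact {ι γ α β : Type*} [UniformSpace α]
    [UniformSpace β] {l : Filter ι} {F : ι → γ → α} {F₀ : γ → α} {s : Set γ} {K : Set α}
    (h : TendstoUniformlyOn F F₀ l s) (hK : IsCompact K) (hF₀ : MapsTo F₀ s K) {f : α → β}
    (hf : ∀ a ∈ K, ContinuousAt f a) :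
    TendstoUniformlyOn (fun q x => f (F q x)) (f ∘ F₀) l s := fun _ hr =>
  (h _ (hK.uniformContinuousAt_of_continuousAt f hf hr)).mono fun _ hq x hx => hq x hx (hF₀ hx)

theorem IsClosed.exists_continuous_eqOn_mem_unitInterval {Z : Type*} [TopologicalSpace Z]
    [NormalSpace Z] {s : Set Z} (hs : IsClosed s) {f : Z → ℝ} (hf : ContinuousOn f s)
    (hfI : ∀ z ∈ s, f z ∈ unitInterval) :
    ∃ g : Z → ℝ, Continuous g ∧ (∀ z, g z ∈ unitInterval) ∧ EqOn g f s := by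
  obtain ⟨g, hgI, hgf⟩ := ContinuousMap.exists_forall_mem_restrict_eq hs
    ⟨s.domRestrict f, hf.domRestrict⟩ (t := unitInterval) fun z => hfI z z.2
  exact ⟨g, g.continuous, hgI, fun z hz => congr($hgf ⟨z, hz⟩)⟩

theorem eventually_exists_continuous_dist_comp_discretization_lt {X ι κ : Type*} [MetricSpace X]
    [Finite κ] {l : Filter ι} {E : ι → Type*} [∀ q, TopologicalSpace (E q)] [∀ q, T4Space (E q)]
    {φ : ∀ q, X → E q} {ψ : ∀ q, E q → X} (hφ : ∀ q, Continuous (φ q))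
    (hψ : ∀ q, ContinuousOn (ψ q) (range (φ q))) {K : Set X} (hK : IsCompact K)
    (hproj : TendstoUniformlyOn (fun q x => ψ q (φ q x)) id l K) {f : κ → X → ℝ}
    (hf : ∀ k, Continuous (f k)) (hfI : ∀ k x, f k x ∈ unitInterval) {η : ℝ} (hη : 0 < η) :
    ∀ᶠ q in l, ∃ g : κ → E q → ℝ, ∀ k, Continuous (g k) ∧ (∀ y, g k y ∈ unitInterval) ∧
      ∀ x ∈ K, dist (g k (φ q x)) (f k x) < η := by
  have hfP : ∀ k, ∀ᶠ q in l, ∀ x ∈ K, dist (f k x) (f k (ψ q (φ q x))) < η := fun k =>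
    Metric.tendstoUniformlyOn_iff.1
      (hproj.comp_of_mapsTo_isCompact hK (mapsTo_id K) fun x _ => (hf k).continuousAt) η hη
  filter_upwards [eventually_all.2 hfP] with q hq
  choose g hg hgI hgf using fun k =>
    (hK.image (hφ q)).isClosed.exists_continuous_eqOn_mem_unitInterval
      ((hf k).comp_continuousOn ((hψ q).mono (image_subset_range _ _))) fun _ _ => hfI k _
  refine ⟨g, fun k => ⟨hg k, hgI k, fun x hx => ?_⟩⟩
  rw [hgf k (mem_image_of_mem _ hx), dist_comm]
  exact hq k x hx

theorem IsCompact.exists_partitionOfUnity_dist_lt {X : Type*} [MetricSpace X] {K : Set X}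
    (hK : IsCompact K) {δ : ℝ} (hδ : 0 < δ) :
    ∃ (t : Finset X) (ρ : PartitionOfUnity t X K), ↑t ⊆ K ∧ ∀ c x, ρ c x ≠ 0 → dist x c < δ := by
  obtain ⟨t, htK, hcover⟩ := hK.elim_nhds_subcover (fun c => Metric.ball c δ)
    fun c _ => Metric.ball_mem_nhds c hδ
  obtain ⟨ρ, hρ⟩ := PartitionOfUnity.exists_isSubordinate hK.isClosed
    (fun c : t => Metric.ball (c : X) δ) (fun _ => Metric.isOpen_ball)
    (by simpa only [iUnion_subtype, Finset.mem_coe] using hcover)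
  exact ⟨t, ρ, htK, fun c x hx => hρ c (subset_tsupport _ hx)⟩

theorem norm_sub_sum_smul_le {J E : Type*} [Fintype J] [SeminormedAddCommGroup E]
    [NormedSpace ℝ E] {a : J → ℝ} (ha₀ : ∀ j, 0 ≤ a j) (ha₁ : ∑ j, a j = 1) {y : E}
    {z : J → E} {ε : ℝ} (hz : ∀ j, a j ≠ 0 → ‖y - z j‖ ≤ ε) :
    ‖y - ∑ j, a j • z j‖ ≤ ε :=
  calc ‖y - ∑ j, a j • z j‖ = ‖∑ j, a j • (y - z j)‖ := by
        simp only [smul_sub, sum_sub_distrib, ← sum_smul, ha₁, one_smul]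
    _ ≤ ∑ j, a j * ε := norm_sum_le_of_le _ fun j _ => by
        rw [norm_smul, Real.norm_of_nonneg (ha₀ j)]
        rcases eq_or_ne (a j) 0 with h | h
        · simp [h]
        · exact mul_le_mul_of_nonneg_left (hz j h) (ha₀ j)
    _ = ε := by rw [← sum_mul, ha₁, one_mul]

theorem ContinuousOn.exists_partitionOfUnity_norm_sub_sum_prod_smul_le {ι : Type*} [Fintype ι]
    [DecidableEq ι] {X : ι → Type*} [∀ i, MetricSpace (X i)] {E : Type*}
    [SeminormedAddCommGroup E] [NormedSpace ℝ E] {K : ∀ i, Set (X i)} (hK : ∀ i, IsCompact (K i))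
    {G : (∀ i, X i) → E} (hG : ContinuousOn G (univ.pi K)) {ε : ℝ} (hε : 0 < ε) :
    ∃ (t : ∀ i, Finset (X i)) (ρ : ∀ i, PartitionOfUnity (t i) (X i) (K i)),
      ∀ v ∈ univ.pi K, ‖G v - ∑ c : ∀ i, t i, (∏ i, ρ i (c i) (v i)) • G fun i => c i‖ ≤ ε := by
  obtain ⟨δ, hδ, hGδ⟩ := Metric.uniformContinuousOn_iff_le.1
    ((isCompact_univ_pi hK).uniformContinuousOn_of_continuous hG) ε hε
  choose t ρ htK hρ using fun i => (hK i).exists_partitionOfUnity_dist_lt hδ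
  refine ⟨t, ρ, fun v hv => norm_sub_sum_smul_le (fun c => prod_nonneg fun i _ =>
    (ρ i).nonneg _ _) ?_ fun c hc => ?_⟩
  · rw [← Fintype.prod_sum fun i k => ρ i k (v i)]
    refine prod_eq_one fun i _ => ?_
    rw [← finsum_eq_sum_of_fintype]
    exact (ρ i).sum_eq_one (hv i (mem_univ i))
  · have hvc : ∀ i, dist (v i) (c i) < δ := fun i =>
      hρ i _ _ fun h => hc (prod_eq_zero (Finset.mem_univ i) h)
    rw [← dist_eq_norm]
    exact hGδ _ hv _ (mem_univ_pi.2 fun i => htK i (c i).2) ((dist_pi_lt_iff hδ).2 hvc).le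

theorem norm_prod_sub_prod_le_sum_norm_sub {ι R : Type*} [NormedCommRing R] [NormOneClass R]
    (s : Finset ι) {a b : ι → R} (ha : ∀ i ∈ s, ‖a i‖ ≤ 1) (hb : ∀ i ∈ s, ‖b i‖ ≤ 1) :
    ‖∏ i ∈ s, a i - ∏ i ∈ s, b i‖ ≤ ∑ i ∈ s, ‖a i - b i‖ := by
  classical
  induction s using Finset.induction_on with
  | empty => simp
  | insert j s hj ih =>
    rw [Finset.forall_mem_insert] at ha hb
    have hbs : ‖∏ i ∈ s, b i‖ ≤ 1 :=
      (Finset.norm_prod_le _ _).trans (prod_le_one (fun _ _ => norm_nonneg _) hb.2)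
    rw [prod_insert hj, prod_insert hj, sum_insert hj]
    calc ‖a j * ∏ i ∈ s, a i - b j * ∏ i ∈ s, b i‖
        = ‖a j * (∏ i ∈ s, a i - ∏ i ∈ s, b i) + (a j - b j) * ∏ i ∈ s, b i‖ := by
          congr 1; ring
      _ ≤ ‖a j‖ * ‖∏ i ∈ s, a i - ∏ i ∈ s, b i‖ + ‖a j - b j‖ * ‖∏ i ∈ s, b i‖ :=
          (norm_add_le _ _).trans (add_le_add (norm_mul_le _ _) (norm_mul_le _ _))
      _ ≤ 1 * ∑ i ∈ s, ‖a i - b i‖ + ‖a j - b j‖ * 1 := by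
          gcongr
          exacts [ha.1, ih ha.2 hb.2]
      _ = ‖a j - b j‖ + ∑ i ∈ s, ‖a i - b i‖ := by ring

theorem norm_sum_prod_smul_sub_sum_prod_smul_le {J ι E : Type*} [Fintype J] [Fintype ι]
    [SeminormedAddCommGroup E] [NormedSpace ℝ E] {a b : J → ι → ℝ} (ha : ∀ j i, ‖a j i‖ ≤ 1)
    (hb : ∀ j i, ‖b j i‖ ≤ 1) {η : ℝ} (hab : ∀ j i, ‖a j i - b j i‖ ≤ η) (u : J → E) :
    ‖∑ j, (∏ i, a j i) • u j - ∑ j, (∏ i, b j i) • u j‖ ≤ Fintype.card ι * η * ∑ j, ‖u j‖ := by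
  rw [← sum_sub_distrib, mul_sum]
  refine norm_sum_le_of_le _ fun j _ => ?_
  rw [← sub_smul, norm_smul]
  gcongr
  calc ‖∏ i, a j i - ∏ i, b j i‖ ≤ ∑ i, ‖a j i - b j i‖ :=
        norm_prod_sub_prod_le_sum_norm_sub _ (fun i _ => ha j i) fun i _ => hb j i
    _ ≤ ∑ _i : ι, η := sum_le_sum fun i _ => hab j i
    _ = Fintype.card ι * η := by simp

theorem exists_fin_sum_prod_smul_eq {J ι M : Type*} [Fintype J] [Fintype ι] [AddCommMonoid M]
    [Module ℝ M] {Z : ι → Type*} [∀ i, TopologicalSpace (Z i)] {g : J → ∀ i, Z i → ℝ}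
    (hg : ∀ j i, Continuous (g j i)) (u : J → M) :
    ∃ p : ℕ, 0 < p ∧ ∃ (g' : Fin p → ∀ i, Z i → ℝ) (u' : Fin p → M),
      (∀ j i, Continuous (g' j i)) ∧
        ∀ z : ∀ i, Z i, ∑ j, (∏ i, g' j i (z i)) • u' j = ∑ j, (∏ i, g j i (z i)) • u j := by
  -- a dummy term with `u' j = 0` makes the number of terms positive
  let e : Fin (Fintype.card J + 1) ≃ Option J := (Fintype.equivFinOfCardEq Fintype.card_option).symm
  refine ⟨Fintype.card J + 1, Nat.succ_pos _, fun j => (e j).elim 0 g, fun j => (e j).elim 0 u,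
    fun j i => ?_, fun z => ?_⟩
  · dsimp only
    rcases e j with _ | j
    exacts [continuous_zero, hg j i]
  · rw [e.sum_comp fun o => (∏ i, (o.elim 0 g : ∀ i, Z i → ℝ) i (z i)) • o.elim 0 u,
      Fintype.sum_option]
    simp

theorem mionet_approximation_metric_spaces_general
    (n : ℕ) (X : Fin n → Type*) [∀ i, MetricSpace (X i)]
    {Y : Type*} [NormedAddCommGroup Y] [NormedSpace ℝ Y]
    (φ : ∀ i : Fin n, ∀ q : ℕ, X i → (Fin q → ℝ))
    (ψ : ∀ i : Fin n, ∀ q : ℕ, (Fin q → ℝ) → X i)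
    (hφ : ∀ i q, Continuous (φ i q))
    (hψ : ∀ i q, ContinuousOn (ψ i q) (Set.range (φ i q)))
    (hproj : ∀ i, ∀ K : Set (X i), IsCompact K →
      TendstoUniformlyOn (fun q x => ψ i q (φ i q x)) id Filter.atTop K)
    (K : ∀ i, Set (X i)) (hK : ∀ i, IsCompact (K i))
    (G : (∀ i, X i) → Y) (hG : ContinuousOn G (Set.univ.pi K))
    (ε : ℝ) (hε : 0 < ε) :
    ∃ p : ℕ, 0 < p ∧ ∃ q : Fin n → ℕ, (∀ i, 0 < q i) ∧
      ∃ (g : ∀ _ : Fin p, ∀ i : Fin n, (Fin (q i) → ℝ) → ℝ) (u : Fin p → Y),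
        (∀ j i, Continuous (g j i)) ∧
        ∀ v : ∀ i, X i, (∀ i, v i ∈ K i) →
          ‖G v - ∑ j, (∏ i, g j i (φ i (q i) (v i))) • u j‖ < ε := by
  obtain ⟨t, ρ, hρ⟩ := hG.exists_partitionOfUnity_norm_sub_sum_prod_smul_le hK (half_pos hε)
  set u : (∀ i, t i) → Y := fun c => G fun i => c i
  obtain ⟨η, hη, hηε⟩ := exists_pos_mul_lt (half_pos hε) (n * ∑ c, ‖u c‖)
  have hρI : ∀ i k x, ρ i k x ∈ unitInterval := fun i k x => ⟨(ρ i).nonneg k x, (ρ i).le_one k x⟩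
  have hdisc : ∀ i, ∃ q, 0 < q ∧ ∃ g : t i → (Fin q → ℝ) → ℝ, ∀ k, Continuous (g k) ∧
      (∀ y, g k y ∈ unitInterval) ∧ ∀ x ∈ K i, dist (g k (φ i q x)) (ρ i k x) < η := fun i =>
    ((eventually_gt_atTop 0).and (eventually_exists_continuous_dist_comp_discretization_lt (hφ i)
      (hψ i) (hK i) (hproj i _ (hK i)) (fun k => (ρ i k).continuous) (hρI i) hη)).exists
  choose q hq g hg using hdisc
  obtain ⟨p, hp, g', u', hg', hsum⟩ :=
    exists_fin_sum_prod_smul_eq (g := fun c i => g i (c i)) (fun c i => (hg i (c i)).1) u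
  refine ⟨p, hp, q, hq, g', u', hg', fun v hv => ?_⟩
  have hnorm_le_one : ∀ x ∈ unitInterval, ‖x‖ ≤ 1 := fun x hx =>
    (Real.norm_of_nonneg hx.1).trans_le hx.2
  have hperturb := norm_sum_prod_smul_sub_sum_prod_smul_le
    (a := fun c i => ρ i (c i) (v i)) (b := fun c i => g i (c i) (φ i (q i) (v i)))
    (fun c i => hnorm_le_one _ (hρI i _ _))
    (fun c i => hnorm_le_one _ ((hg i (c i)).2.1 _))
    (fun c i => by rw [← dist_eq_norm, dist_comm]; exact ((hg i (c i)).2.2 _ (hv i)).le) u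
  rw [Fintype.card_fin] at hperturb
  rw [hsum]
  calc _ ≤ ‖G v - ∑ c, (∏ i, ρ i (c i) (v i)) • u c‖ + ‖∑ c, (∏ i, ρ i (c i) (v i)) • u c
          - ∑ c, (∏ i, g i (c i) (φ i (q i) (v i))) • u c‖ :=
        norm_sub_le_norm_sub_add_norm_sub _ _ _
    _ ≤ ε / 2 + n * η * ∑ c, ‖u c‖ := add_le_add (hρ v (mem_univ_pi.2 hv)) hperturb
    _ < ε := by linarith

/-- **MIONet approximation theorem on metric spaces** (Theorem 3.1).
`X i` are metric spaces equipped with discretizations `φ i q : X i → ℝ^q`,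
reconstructions `ψ i q : ℝ^q → X i` whose compositions (the projections)
converge to the identity uniformly on every compact set.  Any continuous map
`𝒢` from a product of compact sets `K i ⊆ X i` to a Banach space `Y` can be
approximated in the uniform norm by a finite sum of products of the form
`g j 1 (φ (q 1) v₁) ⋯ g j n (φ (q n) vₙ) • u j`. -/
theorem mionet_approximation_metric_spaces
    (n : ℕ) (hn : 1 ≤ n) (X : Fin n → Type*) [∀ i, MetricSpace (X i)]
    {Y : Type*} [NormedAddCommGroup Y] [NormedSpace ℝ Y] [CompleteSpace Y]
    (φ : ∀ i : Fin n, ∀ q : ℕ, X i → (Fin q → ℝ))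
    (ψ : ∀ i : Fin n, ∀ q : ℕ, (Fin q → ℝ) → X i)
    (hφ : ∀ i q, Continuous (φ i q))
    (hψ : ∀ i q, ContinuousOn (ψ i q) (Set.range (φ i q)))
    (hproj : ∀ i, ∀ K : Set (X i), IsCompact K →
      TendstoUniformlyOn (fun q x => ψ i q (φ i q x)) id Filter.atTop K)
    (K : ∀ i, Set (X i)) (hK : ∀ i, IsCompact (K i))
    (G : (∀ i, X i) → Y) (hG : ContinuousOn G (Set.univ.pi K))
    (ε : ℝ) (hε : 0 < ε) :
    ∃ p : ℕ, 0 < p ∧ ∃ q : Fin n → ℕ, (∀ i, 0 < q i) ∧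
      ∃ (g : ∀ _ : Fin p, ∀ i : Fin n, (Fin (q i) → ℝ) → ℝ) (u : Fin p → Y),
        (∀ j i, Continuous (g j i)) ∧
        ∀ v : ∀ i, X i, (∀ i, v i ∈ K i) →
          ‖G v - ∑ j, (∏ i, g j i (φ i (q i) (v i))) • u j‖ < ε :=
  mionet_approximation_metric_spaces_general n X φ ψ hφ hψ hproj K hK G hG ε hε
end

section
/- Let M > 0 and S₀ > 0, and let A, B ⊆ ℝ² be Lebesgue-measurable sets contained in the closed ball of radius M centered at the origin, with Lebesgue measures μ(A) ≥ S₀ and μ(B) ≥ S₀. Define the centroids C(A) := μ(A)^{-1} ∫_A x dx and C(B) := μ(B)^{-1} ∫_B x dx (Bochner integrals of the identity). Then ‖C(A) − C(B)‖ ≤ (2M/S₀)·μ(A Δ B), where A Δ B = (A \ B) ∪ (B \ A) is the symmetric difference. -/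
open MeasureTheory
open scoped symmDiff ENNReal

/-!
Writing `a = μ(A)`, `b = μ(B)`, `u = ∫_A x`, `v = ∫_B x`, one has
`a⁻¹ u - b⁻¹ v = a⁻¹ (u - v) + (a⁻¹ - b⁻¹) v`. The difference `u - v` is the difference of
the integrals over `A \ B` and `B \ A`, so `‖u - v‖ ≤ M μ(A Δ B)`; and `‖v‖ ≤ M b` together with
`|a - b| ≤ μ(A Δ B)` gives `‖(a⁻¹ - b⁻¹) v‖ ≤ a⁻¹ M μ(A Δ B)`. Hence the distance is at most
`2 M μ(A Δ B) / a ≤ 2 M μ(A Δ B) / S₀`.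
-/

theorem norm_inv_smul_sub_inv_smul_le {E : Type*} [NormedAddCommGroup E] [NormedSpace ℝ E]
    {a b C : ℝ} {u v : E} (ha : 0 < a) (hb : 0 < b) (hv : ‖v‖ ≤ C * b) :
    ‖a⁻¹ • u - b⁻¹ • v‖ ≤ a⁻¹ * (‖u - v‖ + C * |a - b|) := by
  have hsplit : a⁻¹ • u - b⁻¹ • v = a⁻¹ • (u - v) + ((b - a) / (a * b)) • v := by
    have hcoeff : (b - a) / (a * b) = a⁻¹ - b⁻¹ := by field_simp
    rw [hcoeff, smul_sub, sub_smul]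
    abel
  calc ‖a⁻¹ • u - b⁻¹ • v‖ ≤ ‖a⁻¹ • (u - v)‖ + ‖((b - a) / (a * b)) • v‖ :=
        hsplit ▸ norm_add_le _ _
    _ ≤ a⁻¹ * ‖u - v‖ + |a - b| / (a * b) * (C * b) := by
        rw [norm_smul, norm_smul, Real.norm_of_nonneg (inv_nonneg.2 ha.le), Real.norm_eq_abs,
          abs_div, abs_of_pos (mul_pos ha hb), abs_sub_comm]
        gcongr
    _ = a⁻¹ * (‖u - v‖ + C * |a - b|) := by field_simp

namespace MeasureTheory

variable {α E : Type*} [MeasurableSpace α] [NormedAddCommGroup E] [NormedSpace ℝ E]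
  {μ : Measure α} {f : α → E} {s t : Set α} {C : ℝ}

theorem norm_setIntegral_sub_setIntegral_le (hs : MeasurableSet s) (ht : MeasurableSet t)
    (hs' : μ s ≠ ∞) (ht' : μ t ≠ ∞) (hfs : IntegrableOn f s μ) (hft : IntegrableOn f t μ)
    (hC : ∀ x ∈ s ∆ t, ‖f x‖ ≤ C) :
    ‖∫ x in s, f x ∂μ - ∫ x in t, f x ∂μ‖ ≤ C * μ.real (s ∆ t) := by
  have hsplit : ∫ x in s, f x ∂μ - ∫ x in t, f x ∂μ =
      ∫ x in s \ t, f x ∂μ - ∫ x in t \ s, f x ∂μ := by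
    rw [← integral_inter_add_sdiff ht hfs, ← integral_inter_add_sdiff hs hft, Set.inter_comm t s]
    abel
  have hst : μ (s \ t) < ∞ := measure_lt_top_of_subset Set.sdiff_subset hs'
  have hts : μ (t \ s) < ∞ := measure_lt_top_of_subset Set.sdiff_subset ht'
  calc ‖∫ x in s, f x ∂μ - ∫ x in t, f x ∂μ‖
      ≤ ‖∫ x in s \ t, f x ∂μ‖ + ‖∫ x in t \ s, f x ∂μ‖ := hsplit ▸ norm_sub_le _ _
    _ ≤ C * μ.real (s \ t) + C * μ.real (t \ s) := by
        gcongr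
        · exact norm_setIntegral_le_of_norm_le_const hst fun x hx => hC x (Or.inl hx)
        · exact norm_setIntegral_le_of_norm_le_const hts fun x hx => hC x (Or.inr hx)
    _ = C * μ.real (s ∆ t) := by rw [measureReal_symmDiff_eq hs ht hs' ht', mul_add]

theorem norm_setAverage_sub_setAverage_le (hs : MeasurableSet s) (ht : MeasurableSet t)
    (hs₀ : 0 < μ.real s) (ht₀ : 0 < μ.real t) (hfs : IntegrableOn f s μ)
    (hft : IntegrableOn f t μ) (hC : ∀ x ∈ s ∪ t, ‖f x‖ ≤ C) :
    ‖⨍ x in s, f x ∂μ - ⨍ x in t, f x ∂μ‖ ≤ 2 * C / μ.real s * μ.real (s ∆ t) := by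
  have hs' : μ s ≠ ∞ := (ENNReal.toReal_pos_iff.1 hs₀).2.ne
  have ht' : μ t ≠ ∞ := (ENNReal.toReal_pos_iff.1 ht₀).2.ne
  have hCt : ‖∫ x in t, f x ∂μ‖ ≤ C * μ.real t :=
    norm_setIntegral_le_of_norm_le_const ht'.lt_top fun x hx => hC x (Or.inr hx)
  have hC' : ∀ x ∈ s ∆ t, ‖f x‖ ≤ C := fun x hx => hC x (Set.symmDiff_subset_union hx)
  obtain ⟨x₀, hx₀⟩ := nonempty_of_measure_ne_zero (ENNReal.toReal_pos_iff.1 hs₀).1.ne'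
  have hC₀ : 0 ≤ C := (norm_nonneg _).trans (hC x₀ (Or.inl hx₀))
  rw [setAverage_eq, setAverage_eq]
  calc _ ≤ (μ.real s)⁻¹ * (‖∫ x in s, f x ∂μ - ∫ x in t, f x ∂μ‖ + C * |μ.real s - μ.real t|) :=
        norm_inv_smul_sub_inv_smul_le hs₀ ht₀ hCt
    _ ≤ (μ.real s)⁻¹ * (C * μ.real (s ∆ t) + C * μ.real (s ∆ t)) := by
        gcongr
        · exact norm_setIntegral_sub_setIntegral_le hs ht hs' ht' hfs hft hC'
        · exact abs_measureReal_sub_le_measureReal_symmDiff' hs.nullMeasurableSet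
            ht.nullMeasurableSet hs' ht'
    _ = 2 * C / μ.real s * μ.real (s ∆ t) := by ring

end MeasureTheory

/-- **Stability of centroids under symmetric difference.**  If `A, B ⊆ ℝ²` are
measurable sets contained in the closed ball of radius `M` around the origin and
each has Lebesgue measure at least `S₀ > 0`, then the Euclidean distance between
their centroids `C(A) = μ(A)⁻¹ ∫_A x dx` and `C(B) = μ(B)⁻¹ ∫_B x dx` is at most
`(2M / S₀) · μ(A Δ B)`. -/
theorem centroid_dist_le_of_symmDiff
    (M S₀ : ℝ) (hM : 0 < M) (hS : 0 < S₀)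
    (A B : Set (EuclideanSpace ℝ (Fin 2)))
    (hAmeas : MeasurableSet A) (hBmeas : MeasurableSet B)
    (hAball : A ⊆ Metric.closedBall 0 M) (hBball : B ⊆ Metric.closedBall 0 M)
    (hAvol : ENNReal.ofReal S₀ ≤ volume A) (hBvol : ENNReal.ofReal S₀ ≤ volume B) :
    ‖(volume A).toReal⁻¹ • (∫ x in A, x) - (volume B).toReal⁻¹ • (∫ x in B, x)‖ ≤
      (2 * M / S₀) * (volume ((A \ B) ∪ (B \ A))).toReal := by
  have hball : volume (Metric.closedBall (0 : EuclideanSpace ℝ (Fin 2)) M) ≠ ∞ :=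
    measure_closedBall_lt_top.ne
  have hA : S₀ ≤ volume.real A :=
    (ENNReal.ofReal_le_iff_le_toReal (measure_ne_top_of_subset hAball hball)).1 hAvol
  have hB : S₀ ≤ volume.real B :=
    (ENNReal.ofReal_le_iff_le_toReal (measure_ne_top_of_subset hBball hball)).1 hBvol
  have hid : IntegrableOn (fun x => x) (Metric.closedBall (0 : EuclideanSpace ℝ (Fin 2)) M) :=
    continuous_id.continuousOn.integrableOn_compact (isCompact_closedBall _ _)
  have hnorm : ∀ x ∈ A ∪ B, ‖x‖ ≤ M := fun x hx =>
    mem_closedBall_zero_iff.1 (hx.elim (fun h => hAball h) fun h => hBball h)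
  calc _ = ‖(⨍ x in A, x) - ⨍ x in B, x‖ := by rw [setAverage_eq, setAverage_eq]; rfl
    _ ≤ 2 * M / volume.real A * volume.real (A ∆ B) :=
        norm_setAverage_sub_setAverage_le hAmeas hBmeas (hS.trans_le hA) (hS.trans_le hB)
          (hid.mono_set hAball) (hid.mono_set hBball) hnorm
    _ ≤ 2 * M / S₀ * volume.real (A ∆ B) := by gcongr
    _ = _ := rfl
end
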